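/- arXiv:1410.5170 — 2 statements merged into one kernel-verified Lean document; each statement's English description precedes it below -/
import Mathlib

section
/- For every α > 0 and all real θ, γ: ∫_ℝ ∫_0^∞ ( e^{−xθ} e^{−y e^{−xθ}} )^{1+α} · ( (2π)^{−1/2} e^{−(x−γ)²/2} )^{1+α} dy dx = (1+α)^{−3/2} (2π)^{−α/2} exp( −αγθ + α²θ²/(2(1+α)) ). (This evaluates the first term of the minimum density power divergence objective function for the exponential regression model with a standard-normal covariate.) -/
open MeasureTheory Real

/-! Integrating out `y` first, the `(1 + α)`-th power of an exponential density with rate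
`a = e^{-xθ}` has integral `a^α / (1 + α)`. What is left is the integral of `e^{-αθx}` against a
Gaussian kernel of precision `1 + α`, i.e. a Gaussian moment generating function. -/

lemma integral_Ioi_rpow_mul_exp_neg_mul {a p : ℝ} (ha : 0 < a) (hp : 0 < p) :
    ∫ y in Set.Ioi (0 : ℝ), (a * exp (-(y * a))) ^ p = a ^ (p - 1) / p := by
  have hpow : ∀ y : ℝ, (a * exp (-(y * a))) ^ p = a ^ p * exp (-(p * a) * y) := fun y => by
    rw [mul_rpow ha.le (exp_pos _).le, ← exp_mul]
    ring_nf
  simp_rw [hpow]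
  rw [integral_const_mul, integral_exp_mul_Ioi (by nlinarith) 0, mul_zero, exp_zero,
    rpow_sub_one ha.ne']
  field_simp

lemma integral_exp_mul_mul_exp_neg_mul_sub_sq {p : ℝ} (hp : 0 < p) (c γ : ℝ) :
    ∫ x : ℝ, exp (c * x) * exp (-(p * (x - γ) ^ 2 / 2))
      = √(2 * π / p) * exp (c * γ + c ^ 2 / (2 * p)) := by
  have hsq : ∀ x : ℝ, exp (c * x) * exp (-(p * (x - γ) ^ 2 / 2))
      = exp (-(p / 2) * (x - (γ + c / p)) ^ 2) * exp (c * γ + c ^ 2 / (2 * p)) := fun x => by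
    rw [← exp_add, ← exp_add]
    congr 1
    field_simp
    ring
  simp_rw [hsq]
  rw [integral_mul_const, integral_sub_right_eq_self (fun x => exp (-(p / 2) * x ^ 2)),
    integral_gaussian, div_div_eq_mul_div, mul_comm π]

lemma normal_density_rpow (p x γ : ℝ) :
    ((2 * π) ^ (-(1 : ℝ) / 2) * exp (-((x - γ) ^ 2) / 2)) ^ p
      = (2 * π) ^ (-p / 2) * exp (-(p * (x - γ) ^ 2 / 2)) := by
  rw [mul_rpow (by positivity) (exp_pos _).le, ← rpow_mul (by positivity), ← exp_mul]
  ring_nf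

/-- For every `α > 0` and all real `θ, γ`,
`∫_ℝ ∫_0^∞ (e^{−xθ} e^{−y e^{−xθ}})^{1+α} ((2π)^{−1/2} e^{−(x−γ)²/2})^{1+α} dy dx`
`= (1+α)^{−3/2} (2π)^{−α/2} exp(−αγθ + α²θ²/(2(1+α)))`.
(First term of the MDPDE objective function for the exponential regression model with a
standard-normal covariate.) -/
theorem mdpde_first_term_exponential_regression (α θ γ : ℝ) (hα : 0 < α) :
    (∫ x : ℝ, ∫ y in Set.Ioi (0 : ℝ),
        (Real.exp (-(x * θ)) * Real.exp (-(y * Real.exp (-(x * θ))))) ^ (1 + α) *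
          ((2 * π) ^ (-(1 : ℝ) / 2) * Real.exp (-((x - γ) ^ 2) / 2)) ^ (1 + α))
      = (1 + α) ^ (-(3 : ℝ) / 2) * (2 * π) ^ (-α / 2) *
          Real.exp (-(α * γ * θ) + α ^ 2 * θ ^ 2 / (2 * (1 + α))) := by
  have hp : 0 < 1 + α := by linarith
  have inner : ∀ x : ℝ, (∫ y in Set.Ioi (0 : ℝ),
      (exp (-(x * θ)) * exp (-(y * exp (-(x * θ))))) ^ (1 + α) *
        ((2 * π) ^ (-(1 : ℝ) / 2) * exp (-((x - γ) ^ 2) / 2)) ^ (1 + α))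
      = (2 * π) ^ (-(1 + α) / 2) / (1 + α) *
          (exp (-(α * θ) * x) * exp (-((1 + α) * (x - γ) ^ 2 / 2))) := fun x => by
    rw [integral_mul_const, integral_Ioi_rpow_mul_exp_neg_mul (exp_pos _) hp, normal_density_rpow,
      add_sub_cancel_left, ← exp_mul]
    ring_nf
  have hconst : (2 * π) ^ (-(1 + α) / 2) / (1 + α) * √(2 * π / (1 + α))
      = (1 + α) ^ (-(3 : ℝ) / 2) * (2 * π) ^ (-α / 2) := by
    rw [sqrt_eq_rpow, div_rpow (by positivity) hp.le, show (-(3 : ℝ) / 2) = -1 - 1 / 2 by norm_num,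
      rpow_sub hp, rpow_neg_one, show -α / 2 = -(1 + α) / 2 + 1 / 2 by ring,
      rpow_add (by positivity)]
    ring
  simp_rw [inner]
  rw [integral_const_mul, integral_exp_mul_mul_exp_neg_mul_sub_sq hp, ← mul_assoc, hconst]
  congr 2
  field_simp
end

section
/- Fix α > 0 and real numbers θ, γ. The function B : (0,∞) × ℝ → ℝ defined by B(y,x) = x (y e^{−xθ} − 1) · ( e^{−xθ} e^{−y e^{−xθ}} )^α · ( (2π)^{−1/2} e^{−(x−γ)²/2} )^α is bounded, i.e., sup_{y>0, x∈ℝ} |B(y,x)| < ∞. (This is the data-dependent part of the MDPDE ψ-function ψ_{1,α} for the exponential regression model with a normal covariate; its boundedness for α > 0, contrasted with the unbounded score at α = 0, establishes the bounded influence function and hence robustness of the MDPDE to both outliers in the response and leverage points in the covariate.) -/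
open Real

lemma mdpde_aux1 (s : ℝ) : s * Real.exp (-s) ≤ 1 := by
  have h := Real.add_one_le_exp s
  have hs : s ≤ Real.exp s := by linarith
  calc s * Real.exp (-s) ≤ Real.exp s * Real.exp (-s) :=
        mul_le_mul_of_nonneg_right hs (Real.exp_pos _).le
    _ = 1 := by rw [← Real.exp_add, add_neg_cancel, Real.exp_zero]

lemma mdpde_aux2 (u : ℝ) (hu : 0 ≤ u) : u * Real.exp (-(u ^ 2)) ≤ 1 := by
  have hle : u ≤ Real.exp (u ^ 2) := by
    rcases le_total u 1 with h | h
    · exact h.trans (Real.one_le_exp (sq_nonneg u))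
    · have h2 : u ≤ u ^ 2 := by nlinarith
      have h3 := Real.add_one_le_exp (u ^ 2)
      linarith
  calc u * Real.exp (-(u ^ 2)) ≤ Real.exp (u ^ 2) * Real.exp (-(u ^ 2)) :=
        mul_le_mul_of_nonneg_right hle (Real.exp_pos _).le
    _ = 1 := by rw [← Real.exp_add, add_neg_cancel, Real.exp_zero]

/-- Fix `α > 0` and reals `θ, γ`.  The data-dependent part of the MDPDE
ψ-function for the exponential regression model with a normal covariate,
`B(y,x) = x (y e^{−xθ} − 1) (e^{−xθ} e^{−y e^{−xθ}})^α ((2π)^{−1/2} e^{−(x−γ)²/2})^α`,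
is bounded over `y > 0`, `x ∈ ℝ`. -/
theorem mdpde_psi_bounded_exponential_regression (α θ γ : ℝ) (hα : 0 < α) :
    ∃ M : ℝ, ∀ y ∈ Set.Ioi (0 : ℝ), ∀ x : ℝ,
      |x * (y * Real.exp (-(x * θ)) - 1) *
          (Real.exp (-(x * θ)) * Real.exp (-(y * Real.exp (-(x * θ))))) ^ α *
          ((2 * π) ^ (-(1 : ℝ) / 2) * Real.exp (-((x - γ) ^ 2) / 2)) ^ α| ≤ M := by
  have hπ : (0 : ℝ) < 2 * π := by positivity
  set K : ℝ := ((2 * π) ^ (-(1 : ℝ) / 2)) ^ α with hKdef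
  have hKpos : 0 < K := Real.rpow_pos_of_pos (Real.rpow_pos_of_pos hπ _) _
  refine ⟨(1 / α + 1) * (2 / Real.sqrt α * Real.exp (α * (γ - θ) ^ 2)) * K, ?_⟩
  intro y hy x
  have hy0 : 0 < y := hy
  set t : ℝ := y * Real.exp (-(x * θ)) with htdef
  have ht : 0 < t := mul_pos hy0 (Real.exp_pos _)
  -- split the rpow factors
  have e1 : (Real.exp (-(x * θ)) * Real.exp (-t)) ^ α
      = Real.exp (-(x * θ * α)) * Real.exp (-(t * α)) := by
    rw [← Real.exp_add, ← Real.exp_mul, ← Real.exp_add]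
    congr 1
    ring
  have e2 : ((2 * π) ^ (-(1 : ℝ) / 2) * Real.exp (-((x - γ) ^ 2) / 2)) ^ α
      = K * Real.exp (-((x - γ) ^ 2 / 2 * α)) := by
    rw [Real.mul_rpow (Real.rpow_pos_of_pos hπ _).le (Real.exp_pos _).le, ← Real.exp_mul]
    congr 2
    ring
  rw [e1, e2]
  -- abbreviations
  set A1 : ℝ := Real.exp (-(x * θ * α)) with hA1
  set A2 : ℝ := Real.exp (-(t * α)) with hA2
  set A3 : ℝ := Real.exp (-((x - γ) ^ 2 / 2 * α)) with hA3
  have hA1p : 0 < A1 := Real.exp_pos _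
  have hA2p : 0 < A2 := Real.exp_pos _
  have hA3p : 0 < A3 := Real.exp_pos _
  have habs : |x * (t - 1) * (A1 * A2) * (K * A3)|
      = (|t - 1| * A2) * (|x| * (A1 * A3)) * K := by
    rw [abs_mul, abs_mul, abs_mul, abs_mul, abs_mul,
      abs_of_pos hA1p, abs_of_pos hA2p, abs_of_pos hA3p, abs_of_pos hKpos]
    ring
  rw [habs]
  -- bound the t-part
  have h1 : |t - 1| * A2 ≤ 1 / α + 1 := by
    have habs' : |t - 1| ≤ t + 1 := by
      rw [abs_le]; constructor <;> linarith
    have h2' : t * A2 ≤ 1 / α := by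
      have h := mdpde_aux1 (t * α)
      calc t * A2 = (1 / α) * ((t * α) * Real.exp (-(t * α))) := by
            rw [hA2]; field_simp
        _ ≤ (1 / α) * 1 := mul_le_mul_of_nonneg_left h (by positivity)
        _ = 1 / α := mul_one _
    have h3' : A2 ≤ 1 := by
      rw [hA2]
      calc Real.exp (-(t * α)) ≤ Real.exp 0 :=
            Real.exp_le_exp.mpr (by nlinarith)
        _ = 1 := Real.exp_zero
    calc |t - 1| * A2 ≤ (t + 1) * A2 :=
          mul_le_mul_of_nonneg_right habs' hA2p.le
      _ = t * A2 + A2 := by ring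
      _ ≤ 1 / α + 1 := add_le_add h2' h3'
  -- bound the x-part
  have hs : 0 < Real.sqrt α := Real.sqrt_pos.mpr hα
  have h2 : |x| * (A1 * A3) ≤ 2 / Real.sqrt α * Real.exp (α * (γ - θ) ^ 2) := by
    have hexp1 : A1 * A3 = Real.exp (-(x * θ * α) + -((x - γ) ^ 2 / 2 * α)) := by
      rw [hA1, hA3, Real.exp_add]
    have hbase : -(x * θ * α) + -((x - γ) ^ 2 / 2 * α)
        ≤ α * (γ - θ) ^ 2 + -(α * x ^ 2 / 4) := by
      nlinarith [mul_le_mul_of_nonneg_left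
        (show -(x * θ) + -((x - γ) ^ 2 / 2) ≤ (γ - θ) ^ 2 + -(x ^ 2 / 4) by
          nlinarith [sq_nonneg (x / 2 - (γ - θ)), sq_nonneg γ]) hα.le]
    have hexple : A1 * A3 ≤ Real.exp (α * (γ - θ) ^ 2) * Real.exp (-(α * x ^ 2 / 4)) := by
      rw [hexp1, ← Real.exp_add]
      exact Real.exp_le_exp.mpr hbase
    have hxg : |x| * Real.exp (-(α * x ^ 2 / 4)) ≤ 2 / Real.sqrt α := by
      set u : ℝ := Real.sqrt α * |x| / 2 with hudef
      have hu : 0 ≤ u := by positivity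
      have hu2 : u ^ 2 = α * x ^ 2 / 4 := by
        rw [hudef, div_pow, mul_pow, Real.sq_sqrt hα.le, sq_abs]
        norm_num
      have haux := mdpde_aux2 u hu
      rw [hu2] at haux
      calc |x| * Real.exp (-(α * x ^ 2 / 4))
          = (2 / Real.sqrt α) * (u * Real.exp (-(α * x ^ 2 / 4))) := by
            rw [hudef]; field_simp
        _ ≤ (2 / Real.sqrt α) * 1 := mul_le_mul_of_nonneg_left haux (by positivity)
        _ = 2 / Real.sqrt α := mul_one _
    calc |x| * (A1 * A3)
        ≤ |x| * (Real.exp (α * (γ - θ) ^ 2) * Real.exp (-(α * x ^ 2 / 4))) :=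
          mul_le_mul_of_nonneg_left hexple (abs_nonneg _)
      _ = Real.exp (α * (γ - θ) ^ 2) * (|x| * Real.exp (-(α * x ^ 2 / 4))) := by ring
      _ ≤ Real.exp (α * (γ - θ) ^ 2) * (2 / Real.sqrt α) :=
          mul_le_mul_of_nonneg_left hxg (Real.exp_pos _).le
      _ = 2 / Real.sqrt α * Real.exp (α * (γ - θ) ^ 2) := by ring
  have h1nn : 0 ≤ |t - 1| * A2 := by positivity
  have h2nn : 0 ≤ |x| * (A1 * A3) := by positivity
  calc (|t - 1| * A2) * (|x| * (A1 * A3)) * K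
      ≤ (1 / α + 1) * (2 / Real.sqrt α * Real.exp (α * (γ - θ) ^ 2)) * K := by
        apply mul_le_mul_of_nonneg_right _ hKpos.le
        exact mul_le_mul h1 h2 h2nn (by positivity)
    _ = (1 / α + 1) * (2 / Real.sqrt α * Real.exp (α * (γ - θ) ^ 2)) * K := rfl
end
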